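/- Let x₁ ≤ ⋯ ≤ xₙ be agent locations, let f ∈ ℝ and y* > f with no agent in the open interval (f, y*). For groups G₁, …, Gₘ with positive weights wⱼ, if max_j wⱼ·Lⱼ(f) ≥ max_j wⱼ·Rⱼ(f) and max_j wⱼ·Lⱼ(f) > 0, then max_j wⱼ·Σ_{i∈Gⱼ}|f − xᵢ| − max_j wⱼ·Σ_{i∈Gⱼ}|y* − xᵢ| ≤ max_j wⱼ·Lⱼ(f)·(y* − f) ≤ max_j wⱼ·Σ_{i∈Gⱼ}|y* − xᵢ|. -/

import Mathlib

/-!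
Since no agent lies strictly between `f` and `y*`, moving the facility from `y*` to `f` brings
each agent right of `f` exactly `y* - f` closer and brings no other agent closer. So group `j`'s
cost at `f` exceeds its cost at `y*` by at most `wⱼ Rⱼ(f) (y* - f)`, which the balance hypothesis
bounds by `max wⱼ Lⱼ(f) (y* - f)`. Conversely, each of the `Lⱼ(f)` agents at or left of `f` is at
distance at least `y* - f` from `y*`.
-/

open Finset

section Line

variable {ι : Type*} (s : Finset ι) (x : ι → ℝ) {f y : ℝ}

theorem abs_sub_le_abs_sub_add_ite {a : ℝ} (hfy : f ≤ y) (ha : a ∉ Set.Ioo f y) :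
    |f - a| ≤ |y - a| + if f < a then y - f else 0 := by
  split_ifs with hfa
  · have hya : y ≤ a := not_lt.1 fun hay => ha ⟨hfa, hay⟩
    rw [abs_of_nonpos (by linarith), abs_of_nonpos (sub_nonpos.2 hya)]
    linarith
  · have haf : a ≤ f := not_lt.1 hfa
    rw [abs_of_nonneg (sub_nonneg.2 haf), abs_of_nonneg (by linarith)]
    linarith

theorem sum_abs_sub_le_sum_abs_sub_add_card_mul (hfy : f ≤ y)
    (hgap : ∀ i ∈ s, x i ∉ Set.Ioo f y) :
    ∑ i ∈ s, |f - x i| ≤ ∑ i ∈ s, |y - x i| + #{i ∈ s | f < x i} * (y - f) := by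
  rw [natCast_card_filter, sum_mul, ← sum_add_distrib]
  gcongr with i hi
  simpa only [ite_mul, one_mul, zero_mul] using abs_sub_le_abs_sub_add_ite hfy (hgap i hi)

theorem card_mul_le_sum_abs_sub : #{i ∈ s | x i ≤ f} * (y - f) ≤ ∑ i ∈ s, |y - x i| :=
  calc (#{i ∈ s | x i ≤ f} : ℝ) * (y - f) = ∑ i ∈ s with x i ≤ f, (y - f) := by
        rw [sum_const, nsmul_eq_mul]
    _ ≤ ∑ i ∈ s with x i ≤ f, |y - x i| := sum_le_sum fun i hi =>
        (sub_le_sub_left (mem_filter.1 hi).2 y).trans (le_abs_self _)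
    _ ≤ ∑ i ∈ s, |y - x i| :=
        sum_le_sum_of_subset_of_nonneg (filter_subset _ _) fun _ _ _ => abs_nonneg _

end Line

section Sup

variable {ι : Type*} {s : Finset ι} (hs : s.Nonempty) {F H : ι → ℝ}

theorem Finset.sup'_sub_sup'_le {c : ℝ} (h : ∀ j ∈ s, F j ≤ H j + c) :
    s.sup' hs F - s.sup' hs H ≤ c := by
  rw [sub_le_iff_le_add']
  exact sup'_le hs F fun j hj => (h j hj).trans (by gcongr; exact le_sup' H hj)

theorem Finset.sup'_mul_le_sup' {c : ℝ} (h : ∀ j ∈ s, F j * c ≤ H j) :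
    s.sup' hs F * c ≤ s.sup' hs H := by
  obtain ⟨j, hj, hjF⟩ := exists_mem_eq_sup' hs F
  rw [hjF]
  exact (h j hj).trans (le_sup' H hj)

end Sup

theorem stmt14_general (n m : ℕ) (x : Fin n → ℝ)
    (G : Fin m → Finset (Fin n)) (w : Fin m → ℝ) (hw : ∀ j, 0 < w j)
    (hM : (Finset.univ : Finset (Fin m)).Nonempty)
    (f ystar : ℝ) (hfy : f < ystar)
    (hgap : ∀ i : Fin n, ¬ (f < x i ∧ x i < ystar))
    (hbal : Finset.univ.sup' hM
        (fun j => w j * (((G j).filter (fun i => f < x i)).card : ℝ))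
      ≤ Finset.univ.sup' hM
        (fun j => w j * (((G j).filter (fun i => x i ≤ f)).card : ℝ))) :
    Finset.univ.sup' hM (fun j => w j * ∑ i ∈ G j, |f - x i|)
        - Finset.univ.sup' hM (fun j => w j * ∑ i ∈ G j, |ystar - x i|)
      ≤ Finset.univ.sup' hM
          (fun j => w j * (((G j).filter (fun i => x i ≤ f)).card : ℝ)) * (ystar - f) ∧
    Finset.univ.sup' hM
        (fun j => w j * (((G j).filter (fun i => x i ≤ f)).card : ℝ)) * (ystar - f)
      ≤ Finset.univ.sup' hM (fun j => w j * ∑ i ∈ G j, |ystar - x i|) := by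
  constructor
  · refine sup'_sub_sup'_le hM fun j _ => ?_
    have hbal_j := (le_sup' (fun j => w j * (#{i ∈ G j | f < x i} : ℝ)) (mem_univ j)).trans hbal
    have hwj : 0 ≤ w j := (hw j).le
    calc w j * ∑ i ∈ G j, |f - x i|
        ≤ w j * (∑ i ∈ G j, |ystar - x i| + #{i ∈ G j | f < x i} * (ystar - f)) := by
          gcongr
          exact sum_abs_sub_le_sum_abs_sub_add_card_mul _ _ hfy.le fun i _ => hgap i
      _ = w j * ∑ i ∈ G j, |ystar - x i| + w j * #{i ∈ G j | f < x i} * (ystar - f) := by ring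
      _ ≤ _ := add_le_add le_rfl (mul_le_mul_of_nonneg_right hbal_j (sub_nonneg.2 hfy.le))
  · refine sup'_mul_le_sup' hM fun j _ => ?_
    rw [mul_assoc]
    exact mul_le_mul_of_nonneg_left (card_mul_le_sum_abs_sub _ _) (hw j).le

theorem stmt14 (n m : ℕ) (x : Fin n → ℝ) (hx : Monotone x)
    (G : Fin m → Finset (Fin n)) (w : Fin m → ℝ) (hw : ∀ j, 0 < w j)
    (hM : (Finset.univ : Finset (Fin m)).Nonempty)
    (f ystar : ℝ) (hfy : f < ystar)
    (hgap : ∀ i : Fin n, ¬ (f < x i ∧ x i < ystar))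
    (hbal : Finset.univ.sup' hM
        (fun j => w j * (((G j).filter (fun i => f < x i)).card : ℝ))
      ≤ Finset.univ.sup' hM
        (fun j => w j * (((G j).filter (fun i => x i ≤ f)).card : ℝ)))
    (hpos : 0 < Finset.univ.sup' hM
        (fun j => w j * (((G j).filter (fun i => x i ≤ f)).card : ℝ))) :
    Finset.univ.sup' hM (fun j => w j * ∑ i ∈ G j, |f - x i|)
        - Finset.univ.sup' hM (fun j => w j * ∑ i ∈ G j, |ystar - x i|)
      ≤ Finset.univ.sup' hM
          (fun j => w j * (((G j).filter (fun i => x i ≤ f)).card : ℝ)) * (ystar - f) ∧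
    Finset.univ.sup' hM
        (fun j => w j * (((G j).filter (fun i => x i ≤ f)).card : ℝ)) * (ystar - f)
      ≤ Finset.univ.sup' hM (fun j => w j * ∑ i ∈ G j, |ystar - x i|) :=
  stmt14_general n m x G w hw hM f ystar hfy hgap hbal
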